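/- arXiv:2103.05485 — 2 statements merged into one kernel-verified Lean document; each statement's English description precedes it below -/
import Mathlib

section
/- Let A be a 2NFA and suppose a computation of A on a tape segment containing zσ starts at the rightmost position (holding σ) in state p, stays within the segment, and exits to the right in state q. Then (p,q) ∈ τ_{zσ} if and only if there exists a finite sequence of states r₀ = p, s₀, r₁, s₁, …, r_ℓ with ℓ ≥ 0 such that (q, right) ∈ δ(r_ℓ, σ), and for each i < ℓ, (s_i, left) ∈ δ(r_i, σ) and (s_i, r_{i+1}) ∈ τ_z. -/
/-!
A run of the segment `zσ` started on the cell `σ` alternates between reading `σ` and excursions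
into `z`. Since the head moves one cell at a time, an excursion that starts with a left move off
`σ` begins on the last cell of `z` and can only return to `σ` by leaving `z` to the right, which is
exactly an entry `(s, r)` of `τ_z`. The run ends with a right move off `σ`. Conversely, such a
chain of excursions followed by a right move is a run of `zσ`.
-/

/-- Head directions of a two-way automaton. -/
inductive WDir | L | R

/-- One step of a 2NFA with transition function `δ` on the tape segment
containing the word `u`: configurations are pairs (state, position), positions
`0, …, u.length - 1` are inside the segment and position `u.length` means the
machine has just exited the segment to the right. -/
def segStep {Q Γ : Type*} (δ : Q → Γ → Set (Q × WDir)) (u : List Γ) :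
    Q × ℕ → Q × ℕ → Prop :=
  fun c c' => ∃ a, u[c.2]? = some a ∧
    (((c'.1, WDir.L) ∈ δ c.1 a ∧ c'.2 + 1 = c.2) ∨
     ((c'.1, WDir.R) ∈ δ c.1 a ∧ c'.2 = c.2 + 1))

/-- Reachability between configurations by a computation staying within the
segment containing `u` (possibly exiting to the right at the last step). -/
def segReach {Q Γ : Type*} (δ : Q → Γ → Set (Q × WDir)) (u : List Γ) :
    Q × ℕ → Q × ℕ → Prop :=
  Relation.ReflTransGen (segStep δ u)

/-- The Shepherdson table `τ_u`: pairs `(p, q)` such that from state `p` on the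
rightmost cell of the segment containing `u` there is a computation staying
within the segment and exiting to the right in state `q`. -/
def tauT {Q Γ : Type*} (δ : Q → Γ → Set (Q × WDir)) (u : List Γ) :
    Set (Q × Q) :=
  {pq | segReach δ u (pq.1, u.length - 1) (pq.2, u.length)}

/-- The table `γ_u`: states `r` such that there is a computation from the
initial state `q₀` at the leftmost cell of the segment containing `u`, staying
within the segment, and exiting to the right in state `r`. -/
def gammaT {Q Γ : Type*} (δ : Q → Γ → Set (Q × WDir)) (q₀ : Q) (u : List Γ) :
    Set Q :=
  {r | segReach δ u (q₀, 0) (r, u.length)}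

namespace Relation

theorem reflTransGen_iff_exists_seq {α : Type*} {R : α → α → Prop} {a b : α} :
    ReflTransGen R a b ↔
      ∃ (ℓ : ℕ) (f : ℕ → α),
        f 0 = a ∧ f ℓ = b ∧ ∀ i < ℓ, R (f i) (f (i + 1)) := by
  constructor
  · intro h
    induction h using ReflTransGen.head_induction_on with
    | refl => exact ⟨0, fun _ => b, rfl, rfl, by simp⟩
    | head hac _ ih =>
      obtain ⟨ℓ, f, hf0, hfℓ, hf⟩ := ih
      refine ⟨ℓ + 1, Nat.rec _ fun i _ => f i, rfl, hfℓ, ?_⟩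
      rintro (_ | i) hi
      · simpa [hf0] using hac
      · exact hf i (by omega)
  · rintro ⟨ℓ, f, rfl, rfl, hf⟩
    exact ReflTransGen.lift f (fun _ _ h => h) _ _ <| reflTransGen_of_succ_of_le
      (fun i j => R (f i) (f j)) (fun i hi => hf i hi.2) ℓ.zero_le

end Relation

section Segment

variable {Q Γ : Type*} {δ : Q → Γ → Set (Q × WDir)}

theorem segStep_append_iff_of_lt {u v : List Γ} {c c' : Q × ℕ} (hc : c.2 < u.length) :
    segStep δ (u ++ v) c c' ↔ segStep δ u c c' := by
  simp only [segStep, List.getElem?_append_left hc]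

theorem segStep.lt_length {u : List Γ} {c c' : Q × ℕ} (h : segStep δ u c c') :
    c.2 < u.length := by
  obtain ⟨a, ha, -⟩ := h
  exact (List.getElem?_eq_some_iff.mp ha).1

theorem segReach.append {u : List Γ} (v : List Γ) {c d : Q × ℕ} (h : segReach δ u c d) :
    segReach δ (u ++ v) c d :=
  Relation.ReflTransGen.mono (fun _ _ hs => (segStep_append_iff_of_lt hs.lt_length).mpr hs) _ _ h

theorem segReach.eq_of_length_le {u : List Γ} {c d : Q × ℕ} (h : segReach δ u c d)
    (hc : u.length ≤ c.2) : d = c := by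
  cases h using Relation.ReflTransGen.head_induction_on with
  | refl => rfl
  | head hs _ => exact absurd hs.lt_length (by omega)

theorem segStep_append_singleton_length_iff {u : List Γ} {σ : Γ} {p : Q} {c' : Q × ℕ} :
    segStep δ (u ++ [σ]) (p, u.length) c' ↔
      ((c'.1, WDir.L) ∈ δ p σ ∧ c'.2 + 1 = u.length) ∨
      ((c'.1, WDir.R) ∈ δ p σ ∧ c'.2 = u.length + 1) := by
  simp [segStep]

end Segment

section Excursion

variable {Q Γ : Type*} {δ : Q → Γ → Set (Q × WDir)} {z : List Γ} {σ : Γ}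

/-- One round `r i ⟶ r (i + 1)` of the recurrence, with the intermediate state `s i` hidden. -/
def tauExcursion (δ : Q → Γ → Set (Q × WDir)) (z : List Γ) (σ : Γ) (r r' : Q) : Prop :=
  ∃ s, (s, WDir.L) ∈ δ r σ ∧ (s, r') ∈ tauT δ z

theorem segReach_of_tauExcursion (hz : z ≠ []) {r r' : Q} (h : tauExcursion δ z σ r r') :
    segReach δ (z ++ [σ]) (r, z.length) (r', z.length) := by
  obtain ⟨s, hL, hτ⟩ := h
  have hpos : 0 < z.length := List.length_pos_iff.mpr hz
  refine .head (segStep_append_singleton_length_iff.mpr (.inl ⟨hL, ?_⟩)) (hτ.append [σ])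
  dsimp only
  omega

theorem segReach_append_singleton_of_tauExcursion (hz : z ≠ []) {p r q : Q}
    (hpr : Relation.ReflTransGen (tauExcursion δ z σ) p r) (hrq : (q, WDir.R) ∈ δ r σ) :
    segReach δ (z ++ [σ]) (p, z.length) (q, z.length + 1) :=
  (Relation.ReflTransGen.lift' (·, z.length) (fun _ _ h => segReach_of_tauExcursion hz h) _ _
    hpr).tail (segStep_append_singleton_length_iff.mpr (.inr ⟨hrq, rfl⟩))

/-- Generalised to every start cell `c.2 ≤ |z|` so that induction on the run goes through. -/
theorem exists_tauExcursion_of_segReach {q : Q} {c : Q × ℕ}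
    (h : segReach δ (z ++ [σ]) c (q, z.length + 1)) (hc : c.2 ≤ z.length) :
    ∃ r, segReach δ z c (r, z.length) ∧
      ∃ r', Relation.ReflTransGen (tauExcursion δ z σ) r r' ∧ (q, WDir.R) ∈ δ r' σ := by
  induction h using Relation.ReflTransGen.head_induction_on with
  | refl => exact absurd hc (by simp)
  | @head c c' hstep hrest ih =>
    obtain ⟨p, i⟩ := c
    rcases hc.lt_or_eq with hlt | rfl
    · have hzstep : segStep δ z (p, i) c' := (segStep_append_iff_of_lt hlt).mp hstep
      have hc' : c'.2 ≤ z.length := by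
        obtain ⟨_, _, h | h⟩ := hzstep <;> dsimp only at * <;> omega
      obtain ⟨r, hr, hexit⟩ := ih hc'
      exact ⟨r, .head hzstep hr, hexit⟩
    · refine ⟨p, .refl, ?_⟩
      rcases segStep_append_singleton_length_iff.mp hstep with ⟨hL, hc'⟩ | ⟨hR, hc'⟩
      · obtain ⟨r, hr, r', hrr', hr'⟩ := ih (by omega)
        have hτ : (c'.1, r) ∈ tauT δ z := by
          obtain ⟨s, j⟩ := c'
          obtain rfl : j = z.length - 1 := by dsimp only at hc'; omega
          exact hr
        exact ⟨r', .head ⟨c'.1, hL, hτ⟩ hrr', hr'⟩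
      · obtain rfl : (q, z.length + 1) = c' := segReach.eq_of_length_le hrest (by simp [hc'])
        exact ⟨p, .refl, hR⟩

theorem mem_tauT_append_singleton_iff (hz : z ≠ []) {p q : Q} :
    (p, q) ∈ tauT δ (z ++ [σ]) ↔
      ∃ r, Relation.ReflTransGen (tauExcursion δ z σ) p r ∧ (q, WDir.R) ∈ δ r σ := by
  have hτ : (p, q) ∈ tauT δ (z ++ [σ]) ↔
      segReach δ (z ++ [σ]) (p, z.length) (q, z.length + 1) := by
    simp [tauT]
  rw [hτ]
  refine ⟨fun h => ?_, fun ⟨_, hpr, hrq⟩ =>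
    segReach_append_singleton_of_tauExcursion hz hpr hrq⟩
  obtain ⟨r, hpr, hr⟩ := exists_tauExcursion_of_segReach h le_rfl
  obtain ⟨rfl, -⟩ := Prod.mk.inj (hpr.eq_of_length_le le_rfl)
  exact hr

end Excursion

/-- Recurrence for `τ_{zσ}`: `(p,q) ∈ τ_{zσ}` iff there is a sequence of states
`r 0 = p, s 0, r 1, s 1, …, r ℓ` (ℓ ≥ 0) with `(q, R) ∈ δ(r ℓ, σ)` and, for each
`i < ℓ`, `(s i, L) ∈ δ(r i, σ)` and `(s i, r (i+1)) ∈ τ_z`. -/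
theorem tau_update {Q Γ : Type*} (δ : Q → Γ → Set (Q × WDir))
    (z : List Γ) (σ : Γ) (hz : z ≠ []) (p q : Q) :
    (p, q) ∈ tauT δ (z ++ [σ]) ↔
      ∃ (ℓ : ℕ) (r s : ℕ → Q),
        r 0 = p ∧ (q, WDir.R) ∈ δ (r ℓ) σ ∧
        ∀ i < ℓ, (s i, WDir.L) ∈ δ (r i) σ ∧ (s i, r (i + 1)) ∈ tauT δ z := by
  rw [mem_tauT_append_singleton_iff hz]
  constructor
  · rintro ⟨_, hpr, hrq⟩
    obtain ⟨ℓ, r, hr0, rfl, hr⟩ := Relation.reflTransGen_iff_exists_seq.mp hpr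
    have : Nonempty Q := ⟨p⟩
    choose! s hs using hr
    exact ⟨ℓ, r, s, hr0, hrq, hs⟩
  · rintro ⟨ℓ, r, s, hr0, hrq, hrs⟩
    refine ⟨r ℓ, Relation.reflTransGen_iff_exists_seq.mpr ⟨ℓ, r, hr0, rfl, ?_⟩, hrq⟩
    exact fun i hi => ⟨s i, hrs i hi⟩
end

section
/- Let A be a 2NFA, z a prefix of the padded input, and σ a symbol. Then q ∈ γ_{zσ} if and only if there exists p ∈ γ_z with (p, q) ∈ τ_{zσ}. -/
namespace segStep

variable {Q Γ : Type*} {δ : Q → Γ → Set (Q × WDir)} {u : List Γ} {c c' : Q × ℕ}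

theorem lt_length_s6 (h : segStep δ u c c') : c.2 < u.length := by
  obtain ⟨a, ha, -⟩ := h
  exact (List.getElem?_eq_some_iff.mp ha).1

theorem le_succ (h : segStep δ u c c') : c'.2 ≤ c.2 + 1 := by
  obtain ⟨a, -, ⟨-, h⟩ | ⟨-, h⟩⟩ := h <;> omega

theorem append_iff {w : List Γ} (hc : c.2 < u.length) :
    segStep δ (u ++ w) c c' ↔ segStep δ u c c' := by
  simp only [segStep, List.getElem?_append_left hc]

end segStep

namespace segReach

variable {Q Γ : Type*} {δ : Q → Γ → Set (Q × WDir)} {u : List Γ} {c d : Q × ℕ}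

theorem append_right (w : List Γ) (h : segReach δ u c d) : segReach δ (u ++ w) c d :=
  Relation.ReflTransGen.mono (fun _ _ hs => (segStep.append_iff hs.lt_length_s6).2 hs) _ _ h

/-- The head moves one cell at a time, so a computation on `u ++ w` that starts inside `u` and
ends at or beyond the right end of `u` first exits `u` by a computation on `u` alone. -/
theorem exists_exit_prefix {w : List Γ} (h : segReach δ (u ++ w) c d)
    (hc : c.2 ≤ u.length) (hd : u.length ≤ d.2) :
    ∃ p, segReach δ u c (p, u.length) ∧ segReach δ (u ++ w) (p, u.length) d := by
  induction h using Relation.ReflTransGen.head_induction_on with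
  | refl =>
    obtain ⟨p, i⟩ := d
    obtain rfl : i = u.length := le_antisymm hc hd
    exact ⟨p, .refl, .refl⟩
  | @head c b step rest ih =>
    obtain ⟨s, i⟩ := c
    obtain rfl | hi := hc.eq_or_lt
    · exact ⟨s, .refl, .head step rest⟩
    · have step' := (segStep.append_iff hi).1 step
      obtain ⟨p, hcp, hpd⟩ := ih (by have := step.le_succ; omega)
      exact ⟨p, .head step' hcp, hpd⟩

end segReach

theorem gamma_update_general {Q Γ : Type*} (δ : Q → Γ → Set (Q × WDir)) (q₀ : Q)
    (z : List Γ) (σ : Γ) (q : Q) :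
    q ∈ gammaT δ q₀ (z ++ [σ]) ↔
      ∃ p ∈ gammaT δ q₀ z, (p, q) ∈ tauT δ (z ++ [σ]) := by
  have hlen : (z ++ [σ]).length - 1 = z.length := by simp
  simp only [gammaT, tauT, Set.mem_ofPred_eq, hlen]
  refine ⟨fun h => h.exists_exit_prefix (Nat.zero_le _) (by simp), ?_⟩
  rintro ⟨p, hp, hpq⟩
  exact (hp.append_right [σ]).trans hpq

/-- `q ∈ γ_{zσ}` iff `(p, q) ∈ τ_{zσ}` for some `p ∈ γ_z`. -/
theorem gamma_update {Q Γ : Type*} (δ : Q → Γ → Set (Q × WDir)) (q₀ : Q)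
    (z : List Γ) (σ : Γ) (hz : z ≠ []) (q : Q) :
    q ∈ gammaT δ q₀ (z ++ [σ]) ↔
      ∃ p ∈ gammaT δ q₀ z, (p, q) ∈ tauT δ (z ++ [σ]) :=
  gamma_update_general δ q₀ z σ q
end
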